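/- Let G and H be episodes such that G ⋠ H (G is not a subepisode of H). Then there exist a sequence s and a window size ρ such that fr(G; s) < fr(H; s). -/

import Mathlib

/-- A sequence event: a unique id, a label (from alphabet encoded as `ℕ`),
and an integer time stamp. -/
structure SeqEvent where
  id : ℕ
  lab : ℕ
  ts : ℤ
deriving DecidableEq

/-- An event sequence: a finite collection of sequence events with distinct ids,
whose time stamps are monotone in the ids. -/
structure EventSeq where
  events : Finset SeqEvent
  id_inj : ∀ e ∈ events, ∀ f ∈ events, e.id = f.id → e = f
  ts_mono : ∀ e ∈ events, ∀ f ∈ events, e.id ≤ f.id → e.ts ≤ f.ts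

/-- An episode: a finite set of episode events (identified by ids in `ℕ`) with labels,
a finite set of graph nodes, a map from events to nodes (surjectivity and the DAG
property are recorded in `Episode.WellFormed`), and weak and proper edges. -/
structure Episode where
  events : Finset ℕ
  lab : ℕ → ℕ
  nodes : Finset ℕ
  node : ℕ → ℕ
  weak : ℕ → ℕ → Prop
  proper : ℕ → ℕ → Prop

namespace Episode

/-- An edge of the episode graph (weak or proper). -/
def edge (G : Episode) (a b : ℕ) : Prop := G.weak a b ∨ G.proper a b

/-- `G.Desc m n` : `n` is a descendant of `m`, i.e. there is a directed path from `m` to `n`. -/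
def Desc (G : Episode) (m n : ℕ) : Prop := Relation.TransGen G.edge m n

/-- `G.PDesc m n` : `n` is a proper descendant of `m`, i.e. some directed path
from `m` to `n` contains a proper edge. -/
def PDesc (G : Episode) (m n : ℕ) : Prop :=
  ∃ a b, Relation.ReflTransGen G.edge m a ∧ G.proper a b ∧ Relation.ReflTransGen G.edge b n

/-- Well-formedness of an episode: events map into the nodes, every node carries an
event, edges run between nodes, the weak and proper edges are disjoint, and the
graph is acyclic (a DAG). -/
structure WellFormed (G : Episode) : Prop where
  node_mem : ∀ e ∈ G.events, G.node e ∈ G.nodes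
  node_surj : ∀ n ∈ G.nodes, ∃ e ∈ G.events, G.node e = n
  weak_mem : ∀ a b, G.weak a b → a ∈ G.nodes ∧ b ∈ G.nodes
  proper_mem : ∀ a b, G.proper a b → a ∈ G.nodes ∧ b ∈ G.nodes
  weak_proper_disjoint : ∀ a b, G.weak a b → G.proper a b → False
  acyclic : ∀ n, ¬ G.Desc n n

/-- The transitive closure of an episode: add an edge from every node to each of its
descendants, proper if the descendant is a proper descendant, weak otherwise. -/
def tcl (G : Episode) : Episode :=
  { G with
    proper := fun a b => G.PDesc a b
    weak := fun a b => G.Desc a b ∧ ¬ G.PDesc a b }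

/-- An episode is transitively closed if it coincides with its transitive closure. -/
def TransClosed (G : Episode) : Prop :=
  (∀ a b, G.proper a b ↔ G.PDesc a b) ∧
  (∀ a b, G.weak a b ↔ (G.Desc a b ∧ ¬ G.PDesc a b))

end Episode

/-- `m` is a coverage mapping of episode `G` into sequence `s`: an injective map from
the episode events into the sequence events preserving labels, mapping events of one
node to a common time stamp, and respecting weak and proper edges. -/
def IsCoverMap (s : EventSeq) (G : Episode) (m : ℕ → SeqEvent) : Prop :=
  (∀ e ∈ G.events, m e ∈ s.events) ∧
  Set.InjOn m ↑G.events ∧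
  (∀ e ∈ G.events, (m e).lab = G.lab e) ∧
  (∀ e ∈ G.events, ∀ f ∈ G.events, G.node e = G.node f → (m e).ts = (m f).ts) ∧
  (∀ e ∈ G.events, ∀ f ∈ G.events, G.Desc (G.node f) (G.node e) → (m f).ts ≤ (m e).ts) ∧
  (∀ e ∈ G.events, ∀ f ∈ G.events, G.PDesc (G.node f) (G.node e) → (m f).ts < (m e).ts)

/-- A sequence `s` covers an episode `G`. -/
def Covers (s : EventSeq) (G : Episode) : Prop := ∃ m, IsCoverMap s G m

/-- `G ⪯ H` : every sequence covering `H` also covers `G`. -/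
def Subepisode (G H : Episode) : Prop := ∀ s : EventSeq, Covers s H → Covers s G

/-- `G ∼ H` : `G ⪯ H` and `H ⪯ G`. -/
def EpisodeSimilar (G H : Episode) : Prop := Subepisode G H ∧ Subepisode H G

/-- The window `s[i, j]`: the subsequence of events with time stamps in `[i, j]`. -/
def EventSeq.window (s : EventSeq) (i j : ℤ) : EventSeq where
  events := s.events.filter (fun e => i ≤ e.ts ∧ e.ts ≤ j)
  id_inj := fun e he f hf h =>
    s.id_inj e (Finset.mem_filter.mp he).1 f (Finset.mem_filter.mp hf).1 h
  ts_mono := fun e he f hf h =>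
    s.ts_mono e (Finset.mem_filter.mp he).1 f (Finset.mem_filter.mp hf).1 h

/-- The support `fr(G; s)` with window size `ρ`: the number of integers `t` such that
the window `s[t, t + ρ - 1]` covers `G` (as an extended natural number). -/
noncomputable def support (ρ : ℤ) (s : EventSeq) (G : Episode) : ℕ∞ :=
  {t : ℤ | Covers (s.window t (t + ρ - 1)) G}.encard

/-- `first(i)` : the smallest time stamp in the range of the instance. -/
noncomputable def instFirst (G : Episode) (m : ℕ → SeqEvent) : ℤ :=
  sInf ((fun e => (m e).ts) '' ↑G.events)

/-- `last(i)` : the largest time stamp in the range of the instance. -/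
noncomputable def instLast (G : Episode) (m : ℕ → SeqEvent) : ℤ :=
  sSup ((fun e => (m e).ts) '' ↑G.events)

/-- `m` is an instance of `G` in `s` (with window size `ρ`): a coverage mapping of `G`
into `s` such that no used sequence event can be replaced by an unused one with the same
label, the same time stamp and a smaller id, and whose span is less than `ρ`. -/
def IsInstance (ρ : ℤ) (s : EventSeq) (G : Episode) (m : ℕ → SeqEvent) : Prop :=
  IsCoverMap s G m ∧
  (∀ e ∈ G.events, ∀ f ∈ s.events, (∀ e' ∈ G.events, m e' ≠ f) →
      f.lab = (m e).lab → f.ts = (m e).ts → ¬ f.id < (m e).id) ∧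
  instLast G m - instFirst G m ≤ ρ - 1


/-! A sequence `s` covering `H` but not `G` separates the supports: every window of `s` is a
subsequence of `s`, so no window covers `G`, while a window wide enough to contain all of `s`
covers `H`. -/

theorem IsCoverMap.mono {s s' : EventSeq} {G : Episode} {m : ℕ → SeqEvent}
    (hss : s.events ⊆ s'.events) (hm : IsCoverMap s G m) : IsCoverMap s' G m :=
  ⟨fun e he => hss (hm.1 e he), hm.2⟩

theorem Covers.of_window {s : EventSeq} {G : Episode} {i j : ℤ}
    (h : Covers (s.window i j) G) : Covers s G :=
  let ⟨m, hm⟩ := h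
  ⟨m, hm.mono (Finset.filter_subset _ _)⟩

theorem support_eq_zero_of_not_covers {s : EventSeq} {G : Episode} (h : ¬ Covers s G)
    (ρ : ℤ) : support ρ s G = 0 := by
  rw [support, Set.encard_eq_zero, Set.eq_empty_iff_forall_notMem]
  exact fun _ ht => h ht.of_window

theorem EventSeq.window_eq_self {s : EventSeq} {i j : ℤ}
    (h : ∀ e ∈ s.events, i ≤ e.ts ∧ e.ts ≤ j) : s.window i j = s := by
  cases s
  simp only [EventSeq.window, EventSeq.mk.injEq]
  exact Finset.filter_true_of_mem h

theorem EventSeq.exists_window_eq_self (s : EventSeq) : ∃ N : ℕ, s.window (-N) N = s := by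
  refine ⟨s.events.sup fun e => e.ts.natAbs, EventSeq.window_eq_self fun e he => ?_⟩
  have hN : e.ts.natAbs ≤ s.events.sup fun e => e.ts.natAbs :=
    Finset.le_sup (f := fun e : SeqEvent => e.ts.natAbs) he
  omega

theorem exists_support_pos_of_covers {s : EventSeq} {G : Episode} (h : Covers s G) :
    ∃ ρ : ℤ, 1 ≤ ρ ∧ 0 < support ρ s G := by
  obtain ⟨N, hN⟩ := s.exists_window_eq_self
  refine ⟨2 * N + 1, by omega, Set.encard_pos.mpr ⟨-N, ?_⟩⟩
  have hwidth : -(N : ℤ) + (2 * N + 1) - 1 = N := by ring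
  simpa only [Set.mem_ofPred_eq, hwidth, hN] using h

theorem exists_support_lt_of_not_subepisode_general (G H : Episode)
    (h : ¬ Subepisode G H) :
    ∃ (s : EventSeq) (ρ : ℤ), 1 ≤ ρ ∧ support ρ s G < support ρ s H := by
  obtain ⟨s, hsH, hsG⟩ : ∃ s, Covers s H ∧ ¬ Covers s G := by
    simpa [Subepisode] using h
  obtain ⟨ρ, hρ, hpos⟩ := exists_support_pos_of_covers hsH
  exact ⟨s, ρ, hρ, support_eq_zero_of_not_covers hsG ρ ▸ hpos⟩

/-- If `G ⋠ H` then there are a sequence `s` and a window size `ρ`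
with `fr(G; s) < fr(H; s)`. -/
theorem exists_support_lt_of_not_subepisode (G H : Episode)
    (hG : G.WellFormed) (hH : H.WellFormed) (h : ¬ Subepisode G H) :
    ∃ (s : EventSeq) (ρ : ℤ), 1 ≤ ρ ∧ support ρ s G < support ρ s H :=
  exists_support_lt_of_not_subepisode_general G H h
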